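/- Let G be a finite abelian group, α an automorphism of G with α² = 1, and S = G \ ω_α(G), where ω_α(G) = {α(g)·g⁻¹ : g ∈ G}. Then S and α satisfy the defining conditions of a generalized Cayley graph, and GC(G, S, α) is isomorphic to the complete multipartite graph with m parts each of size n (that is, K_m[∅_n], the lexicographic product of the complete graph K_m with the empty graph on n vertices), where n = |ω_α(G)| and m = |G|/n. -/

import Mathlib

/-!
ω_α(G) is the range of the homomorphism `g ↦ α g * g⁻¹`; it contains `α x⁻¹ * x`, and `α`
maps it onto itself because `α` commutes with that homomorphism. Hence
`α x⁻¹ * y ∈ ω_α(G)` iff `x⁻¹ * y ∈ ω_α(G)`, i.e. two vertices of `GC(G, S, α)` are adjacent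
exactly when they lie in different cosets of ω_α(G). The `|G| / n` cosets, each of size `n`,
are the parts of the complete multipartite graph.
-/

/-- The generalized Cayley graph `GC(G, S, α)`. -/
def GC {G : Type*} [Group G] (α : G ≃* G) (S : Set G)
    (h1 : ∀ x : G, α (α x) = x)
    (h2 : ∀ x : G, α x⁻¹ * x ∉ S)
    (h3 : ⇑α '' S⁻¹ = S) : SimpleGraph G where
  Adj x y := α x⁻¹ * y ∈ S
  symm := ⟨by
    intro x y hxy
    have hmem : (α x⁻¹ * y)⁻¹ ∈ S⁻¹ := by simpa [Set.mem_inv] using hxy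
    have himg : α ((α x⁻¹ * y)⁻¹) ∈ ⇑α '' S⁻¹ := Set.mem_image_of_mem _ hmem
    rw [h3] at himg
    simpa [mul_inv_rev, map_mul, map_inv, h1] using himg⟩
  loopless := ⟨fun x hx => h2 x hx⟩


open SimpleGraph

section CosetGraph

variable {G : Type*} [Group G]

theorem nonempty_comap_mk_iso_completeMultipartiteGraph [Finite G] (K : Subgroup G) :
    Nonempty ((⊤ : SimpleGraph (G ⧸ K)).comap QuotientGroup.mk ≃g
      completeMultipartiteGraph (fun _ : Fin (Nat.card G / Nat.card K) => Fin (Nat.card K))) := by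
  have hcard : Nat.card (G ⧸ K) = Nat.card G / Nat.card K := by
    rw [K.card_eq_card_quotient_mul_card_subgroup, Nat.mul_div_cancel _ Nat.card_pos]
  let eQ := Finite.equivFinOfCardEq hcard
  let e := (Subgroup.groupEquivQuotientProdSubgroup (s := K)).trans
    (eQ.prodCongr (Finite.equivFin K))
  let i : (⊤ : SimpleGraph (G ⧸ K)).comap QuotientGroup.mk ≃g completeEquipartiteGraph _ _ :=
    ⟨e, eQ.injective.ne_iff⟩
  exact ⟨i.trans completeEquipartiteGraph.completeMultipartiteGraph⟩

theorem GC_univ_diff_subgroup_eq_comap (α : G ≃* G) (K : Subgroup G) (h1 : ∀ x, α (α x) = x)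
    (h2 : ∀ x, α x⁻¹ * x ∉ Set.univ \ (K : Set G))
    (h3 : ⇑α '' (Set.univ \ (K : Set G))⁻¹ = Set.univ \ K) :
    GC α (Set.univ \ K) h1 h2 h3 = (⊤ : SimpleGraph (G ⧸ K)).comap QuotientGroup.mk := by
  ext x y
  have hx : α x⁻¹ * x ∈ K := by simpa using h2 x
  have hsplit : α x⁻¹ * y = (α x⁻¹ * x) * (x⁻¹ * y) := by group
  change α x⁻¹ * y ∈ Set.univ \ (K : Set G) ↔ (x : G ⧸ K) ≠ y
  rw [ne_eq, QuotientGroup.eq, hsplit, Set.mem_sdiff, SetLike.mem_coe,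
    K.mul_mem_cancel_left hx]
  exact and_iff_right (Set.mem_univ _)

theorem image_inv_univ_diff_subgroup (α : G ≃* G) (K : Subgroup G) (hK : ⇑α '' K = K) :
    ⇑α '' (Set.univ \ (K : Set G))⁻¹ = Set.univ \ K := by
  rw [← Set.compl_eq_univ_sdiff, Set.compl_inv, inv_coe_set, Set.image_compl_eq α.bijective, hK]

end CosetGraph

section Omega

variable {G F : Type*} [CommGroup G] [FunLike F G G] [MonoidHomClass F G G]

def omegaSubgroup (α : F) : Subgroup G := ((α : G →* G) / MonoidHom.id G).range

theorem coe_omegaSubgroup (α : F) :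
    (omegaSubgroup α : Set G) = Set.range fun g => α g * g⁻¹ := by
  ext; simp [omegaSubgroup, div_eq_mul_inv]

theorem apply_inv_mul_self_mem_omegaSubgroup (α : F) (x : G) :
    α x⁻¹ * x ∈ omegaSubgroup α := by
  simpa using (coe_omegaSubgroup α).ge ⟨x⁻¹, rfl⟩

theorem image_omegaSubgroup (α : G ≃* G) : ⇑α '' omegaSubgroup α = omegaSubgroup α := by
  have hcomm : α ∘ (fun g => α g * g⁻¹) = (fun g => α g * g⁻¹) ∘ α := by
    funext g
    simp
  rw [coe_omegaSubgroup, ← Set.range_comp, hcomm, α.surjective.range_comp]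

end Omega

/-- For a finite abelian group `G`, an automorphism `α` with `α² = 1` and
`S = G \ ω_α(G)`, the pair `(S, α)` satisfies the defining conditions of a generalized
Cayley graph, and `GC(G, S, α)` is isomorphic to the complete multipartite graph with
`m = |G|/n` parts each of size `n = |ω_α(G)|`. -/
theorem stmt_19 {G : Type*} [CommGroup G] [Fintype G] (α : G ≃* G)
    (h1 : ∀ x : G, α (α x) = x) :
    ∃ (h2 : ∀ x : G, α x⁻¹ * x ∉ Set.univ \ Set.range (fun g : G => α g * g⁻¹))
      (h3 : ⇑α '' (Set.univ \ Set.range (fun g : G => α g * g⁻¹))⁻¹ =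
        Set.univ \ Set.range (fun g : G => α g * g⁻¹)),
      Nonempty
        (GC α (Set.univ \ Set.range (fun g : G => α g * g⁻¹)) h1 h2 h3 ≃g
          SimpleGraph.completeMultipartiteGraph
            (fun _ : Fin (Nat.card G / Nat.card (Set.range fun g : G => α g * g⁻¹)) =>
              Fin (Nat.card (Set.range fun g : G => α g * g⁻¹)))) := by
  rw [← coe_omegaSubgroup α]
  have h2 : ∀ x, α x⁻¹ * x ∉ Set.univ \ (omegaSubgroup α : Set G) :=
    fun x hx => hx.2 (apply_inv_mul_self_mem_omegaSubgroup α x)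
  refine ⟨h2, image_inv_univ_diff_subgroup α _ (image_omegaSubgroup α), ?_⟩
  rw [GC_univ_diff_subgroup_eq_comap]
  exact nonempty_comap_mk_iso_completeMultipartiteGraph _
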